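/- Haiman move compatibility: suppose λ, μ, ν are shapes such that μ extends λ and ν extends λ ∪ μ, and let A, B, T, U be standard tableaux with shape(A) = λ, shape(T) = shape(U) = μ, shape(B) = ν. If T ≡_D U then A ⨿ T ⨿ B ≡_D A ⨿ U ⨿ B. -/

import Mathlib

open scoped Classical

noncomputable section

variable {Λ : Type} [Fintype Λ] [PartialOrder Λ]

/-- The set of boxes occupied by a (partial) filling. -/
def shape (T : Λ → Option ℕ) : Finset Λ :=
  Finset.univ.filter fun x => (T x).isSome

/-- Lower order ideal (straight shape). -/
def IsLowerIdeal (S : Finset Λ) : Prop := ∀ x ∈ S, ∀ y, y ≤ x → y ∈ S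

/-- `T` is a standard filling of a skew shape: its domain is a difference of
nested lower order ideals, its labels are exactly `1,…,m` each used once, and
labels strictly increase along the order of `Λ`. -/
def IsStandard (T : Λ → Option ℕ) : Prop :=
  (∃ lam : Finset Λ, IsLowerIdeal lam ∧ Disjoint lam (shape T) ∧
    IsLowerIdeal (lam ∪ shape T)) ∧
  (∀ i : ℕ, 1 ≤ i → i ≤ (shape T).card → ∃! x : Λ, T x = some i) ∧
  (∀ x ∈ shape T, ∃ i : ℕ, T x = some i ∧ 1 ≤ i ∧ i ≤ (shape T).card) ∧
  (∀ x y : Λ, x ∈ shape T → y ∈ shape T → x < y →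
    ∀ i j : ℕ, T x = some i → T y = some j → i < j)

def lab (T : Λ → Option ℕ) (x : Λ) : ℕ := (T x).getD 0

def pickMinBy (f : Λ → ℕ) (s : Finset Λ) (h : s.Nonempty) : Λ :=
  (Finset.exists_min_image s f h).choose

def pickMaxBy (f : Λ → ℕ) (s : Finset Λ) (h : s.Nonempty) : Λ :=
  (Finset.exists_max_image s f h).choose

/-- One full jeu de taquin slide into the vacant box `x`: repeatedly move into the
vacancy the smallest label among the boxes covering it. -/
def slideAux : ℕ → (Λ → Option ℕ) → Λ → (Λ → Option ℕ)
  | 0, T, _ => T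
  | n+1, T, x =>
    let cands := (shape T).filter fun y => x ⋖ y
    if h : cands.Nonempty then
      let y := pickMinBy (lab T) cands h
      slideAux n (fun z => if z = x then T y else if z = y then none else T z) y
    else T

/-- One full reverse jeu de taquin slide into the vacant box `x`: repeatedly move
into the vacancy the largest label among the boxes it covers. -/
def revSlideAux : ℕ → (Λ → Option ℕ) → Λ → (Λ → Option ℕ)
  | 0, T, _ => T
  | n+1, T, x =>
    let cands := (shape T).filter fun y => y ⋖ x
    if h : cands.Nonempty then
      let y := pickMaxBy (lab T) cands h
      revSlideAux n (fun z => if z = x then T y else if z = y then none else T z) y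
    else T

/-- `x` is an admissible box for an (inner) jeu de taquin slide on `T`:
vacant, below some box of `T`, and maximal such. -/
def InnerAdmissible (T : Λ → Option ℕ) (x : Λ) : Prop :=
  T x = none ∧ (∃ y ∈ shape T, x < y) ∧
  ∀ z : Λ, T z = none → (∃ y ∈ shape T, z < y) → ¬ x < z

/-- `x` is an admissible box for a reverse jeu de taquin slide on `T`:
vacant, above some box of `T`, and minimal such. -/
def OuterAdmissible (T : Λ → Option ℕ) (x : Λ) : Prop :=
  T x = none ∧ (∃ y ∈ shape T, y < x) ∧
  ∀ z : Λ, T z = none → (∃ y ∈ shape T, y < z) → ¬ z < x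

def jdt (x : Λ) (T : Λ → Option ℕ) : Λ → Option ℕ :=
  if InnerAdmissible T x then slideAux (Fintype.card Λ) T x else T

def revjdt (x : Λ) (T : Λ → Option ℕ) : Λ → Option ℕ :=
  if OuterAdmissible T x then revSlideAux (Fintype.card Λ) T x else T

/-- Apply a sequence of slides (`true`) and reverse slides (`false`) at the
given boxes. -/
def applySeq (s : List (Bool × Λ)) (T : Λ → Option ℕ) : Λ → Option ℕ :=
  s.foldl (fun T p => if p.1 then jdt p.2 T else revjdt p.2 T) T

/-- Dual equivalence: same shape, and every common sequence of slides and
reverse slides produces tableaux of the same shape. -/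
def DualEquiv (T U : Λ → Option ℕ) : Prop :=
  shape T = shape U ∧
  ∀ s : List (Bool × Λ), shape (applySeq s T) = shape (applySeq s U)

/-- `mu` extends `lam`: `lam ∪ mu` is a straight shape containing `lam` and `mu`
as complementary down-closed and up-closed subsets. -/
def ShapeExtends (mu lam : Finset Λ) : Prop :=
  Disjoint lam mu ∧ IsLowerIdeal (lam ∪ mu) ∧
  (∀ x ∈ lam, ∀ y ∈ lam ∪ mu, y ≤ x → y ∈ lam) ∧
  (∀ x ∈ mu, ∀ y ∈ lam ∪ mu, x ≤ y → y ∈ mu)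

/-- `A ⨿ B`: keep the labels of `A` and shift the labels of `B` up by `|shape A|`. -/
def tabConcat (A B : Λ → Option ℕ) : Λ → Option ℕ := fun x =>
  match A x with
  | some i => some i
  | none => (B x).map (· + (shape A).card)

/-- One step of infusion on a triple `(T, U, V)`: remove the largest label of `T`
at its box `x`, slide `U` into `x`, and record the removed label at the vacated
hole in `V`. -/
def infusionStep :
    ((Λ → Option ℕ) × (Λ → Option ℕ) × (Λ → Option ℕ)) →
    ((Λ → Option ℕ) × (Λ → Option ℕ) × (Λ → Option ℕ)) := fun p =>
  let T := p.1; let U := p.2.1; let V := p.2.2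
  if h : (shape T).Nonempty then
    let x := pickMaxBy (lab T) (shape T) h
    let T' := fun z => if z = x then none else T z
    let U' := slideAux (Fintype.card Λ) U x
    let hole := if h2 : (shape U \ shape U').Nonempty then h2.choose else x
    let V' := fun z => if z = hole then T x else V z
    (T', U', V')
  else p

/-- `infusion (T,U)` for `U` extending `T`: slide `U` through the boxes of `T` in
decreasing label order; first output is the slid `U`, second records `T`'s labels
in the vacated holes. -/
def infusion (T U : Λ → Option ℕ) : (Λ → Option ℕ) × (Λ → Option ℕ) :=
  let r := infusionStep^[Fintype.card Λ] (T, U, fun _ => none)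
  (r.2.1, r.2.2)

/-- One step of reverse infusion: remove the smallest label of `U` at its box `x`,
reverse-slide `T` into `x`, and record the removed label at the vacated hole. -/
def revinfusionStep :
    ((Λ → Option ℕ) × (Λ → Option ℕ) × (Λ → Option ℕ)) →
    ((Λ → Option ℕ) × (Λ → Option ℕ) × (Λ → Option ℕ)) := fun p =>
  let T := p.1; let U := p.2.1; let V := p.2.2
  if h : (shape U).Nonempty then
    let x := pickMinBy (lab U) (shape U) h
    let U' := fun z => if z = x then none else U z
    let T' := revSlideAux (Fintype.card Λ) T x
    let hole := if h2 : (shape T \ shape T').Nonempty then h2.choose else x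
    let V' := fun z => if z = hole then U x else V z
    (T', U', V')
  else p

/-- `revinfusion (T,U)`: reverse-slide `T` through the boxes of `U` in increasing
label order; first output records `U`'s labels in the vacated holes (a straight
tableau), second is the migrated `T`. -/
def revinfusion (T U : Λ → Option ℕ) : (Λ → Option ℕ) × (Λ → Option ℕ) :=
  let r := revinfusionStep^[Fintype.card Λ] (T, U, fun _ => none)
  (r.2.2, r.1)

def applyJdtSeq (l : List Λ) (T : Λ → Option ℕ) : Λ → Option ℕ :=
  l.foldl (fun T x => jdt x T) T

/-- `V` is a rectification of `T`: obtained from `T` by jeu de taquin slides and of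
straight shape. -/
def IsRectificationOf (V T : Λ → Option ℕ) : Prop :=
  (∃ l : List Λ, applyJdtSeq l T = V) ∧ IsLowerIdeal (shape V)

/-- The rectification of `T` (any choice of rectifying slide sequence). -/
def rect (T : Λ → Option ℕ) : Λ → Option ℕ :=
  if h : ∃ l : List Λ, IsLowerIdeal (shape (applyJdtSeq l T)) then
    applyJdtSeq h.choose T else T

/-- Sch\"utzenberger's `Δ`: delete the entry `1` at the minimum `b`, decrease all
labels by one, and slide into `b`. -/
def delta (b : Λ) (T : Λ → Option ℕ) : Λ → Option ℕ :=
  slideAux (Fintype.card Λ) (fun x => if x = b then none else (T x).map (· - 1)) b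

/-- Evacuation: the label of `x` is `|λ|+1-i` where `x ∈ shape (Δ^[i-1] T) \ shape (Δ^[i] T)`. -/
def evac (b : Λ) (T : Λ → Option ℕ) : Λ → Option ℕ := fun x =>
  if x ∈ shape T then
    some ((shape T).card + 1 -
      ((Finset.range (shape T).card).filter fun j => x ∈ shape ((delta b)^[j] T)).card)
  else none

/-- The shapes lying one box above `γ` and inside `β`. -/
def Between (γ β : Finset Λ) : Set (Finset Λ) :=
  {ε | IsLowerIdeal ε ∧ γ ⊆ ε ∧ ε ⊆ β ∧ ε.card = γ.card + 1}

/-- The local growth rule for a 2×2 square with corners `α` (top-left), `β`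
(top-right), `γ` (bottom-left), `δ` (bottom-right). -/
def LocalRule (α β γ δ : Finset Λ) : Prop :=
  δ ∈ Between γ β ∧ (δ = α ↔ Between γ β = {α})

/-- A `(p+1) × (q+1)` growth diagram (rows indexed from the top). -/
def IsGrowthDiagram (p q : ℕ) (g : ℕ → ℕ → Finset Λ) : Prop :=
  (∀ i j, i ≤ p → j ≤ q → IsLowerIdeal (g i j)) ∧
  (∀ i j, i ≤ p → j < q → g i j ⊆ g i (j+1) ∧ (g i (j+1)).card = (g i j).card + 1) ∧
  (∀ i j, i < p → j ≤ q → g (i+1) j ⊆ g i j ∧ (g i j).card = (g (i+1) j).card + 1) ∧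
  (∀ i j, i < p → j < q → LocalRule (g i j) (g i (j+1)) (g (i+1) j) (g (i+1) (j+1)))

/-- The tableau of shape `{x₁,…,x_p}` encoding a slide sequence: `x_i` gets label `p+1-i`. -/
def encodeTab (l : List Λ) : Λ → Option ℕ := fun x =>
  if x ∈ l then some (l.length - l.findIdx (fun y => decide (y = x))) else none

end

/-!
Put `a = |λ|` and `m = |μ|`. The tableaux `A ⨿ T ⨿ B` and `A ⨿ U ⨿ B` agree outside the label
window `(a, a + m]`, and inside it they are `T` and `U`. This relation (agreement outside the
window, dual equivalence inside) survives every slide. While the hole exchanges with labels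
outside the window, both slides make the same moves. Once it reaches a window label, it runs
through the window exactly as in the slide of the window alone, so by dual equivalence it leaves
the window at the same box in both tableaux. Reverse slides are symmetric.
-/

noncomputable section

section Fillings

variable {Λ : Type} {T : Λ → Option ℕ} {x y : Λ}

theorem lab_eq_of_eq_some {i : ℕ} (hx : T x = some i) : lab T x = i := by
  simp [lab, hx]

theorem pickMinBy_mem (f : Λ → ℕ) (s : Finset Λ) (hs : s.Nonempty) : pickMinBy f s hs ∈ s :=
  (Finset.exists_min_image s f hs).choose_spec.1

theorem pickMaxBy_mem (f : Λ → ℕ) (s : Finset Λ) (hs : s.Nonempty) : pickMaxBy f s hs ∈ s :=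
  (Finset.exists_max_image s f hs).choose_spec.1

def moveInto (T : Λ → Option ℕ) (x y : Λ) : Λ → Option ℕ :=
  fun z => if z = x then T y else if z = y then none else T z

theorem moveInto_of_ne {z : Λ} (hx : z ≠ x) (hy : z ≠ y) : moveInto T x y z = T z := by
  simp [moveInto, hx, hy]

theorem moveInto_eq_self (hx : T x = none) (hy : T y = none) : moveInto T x y = T := by
  funext z
  by_cases hzx : z = x
  · simp [moveInto, hzx, hx, hy]
  by_cases hzy : z = y <;> simp [moveInto, hzx, hzy, hy]

theorem lab_moveInto_self : lab (moveInto T x y) x = lab T y := by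
  simp [lab, moveInto]

theorem lab_moveInto_of_ne {z : Λ} (hx : z ≠ x) (hy : z ≠ y) :
    lab (moveInto T x y) z = lab T z := by
  simp [lab, moveInto_of_ne hx hy]

def window (a m : ℕ) (T : Λ → Option ℕ) : Λ → Option ℕ :=
  fun x => (T x).bind fun i => if a < i ∧ i ≤ a + m then some (i - a) else none

def outside (a m : ℕ) (T : Λ → Option ℕ) : Λ → Option ℕ :=
  fun x => (T x).bind fun i => if a < i ∧ i ≤ a + m then none else some i

variable {a m : ℕ}

theorem window_moveInto : window a m (moveInto T x y) = moveInto (window a m T) x y := by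
  funext z
  simp only [window, moveInto]
  split_ifs <;> rfl

theorem outside_moveInto : outside a m (moveInto T x y) = moveInto (outside a m T) x y := by
  funext z
  simp only [outside, moveInto]
  split_ifs <;> rfl

theorem lab_window (hx : lab T x ≤ a + m) : lab (window a m T) x = lab T x - a := by
  cases hx' : T x with
  | none => simp [window, lab, hx']
  | some i =>
    rw [lab_eq_of_eq_some hx'] at hx
    by_cases hi : a < i <;>
      simp [window, lab, hx', hi, hx, Nat.sub_eq_zero_of_le, le_of_not_gt]

variable [Fintype Λ]

theorem mem_shape : x ∈ shape T ↔ ∃ i, T x = some i := by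
  simp [shape, Option.isSome_iff_exists]

theorem notMem_shape : x ∉ shape T ↔ T x = none := by
  simp [shape]

theorem eq_some_lab (hx : x ∈ shape T) : T x = some (lab T x) := by
  obtain ⟨i, hi⟩ := mem_shape.1 hx
  simp [lab, hi]

theorem shape_moveInto (hy : y ∈ shape T) (hxy : x ≠ y) :
    shape (moveInto T x y) = insert x ((shape T).erase y) := by
  ext z
  by_cases hzx : z = x
  · subst hzx
    simpa [mem_shape, moveInto] using hy
  by_cases hzy : z = y
  · subst hzy
    have : moveInto T x z z = none := by simp [moveInto, hzx]
    simp [hzx, notMem_shape.2 this]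
  simp [mem_shape, moveInto, hzx, hzy]

theorem mem_shape_moveInto {z : Λ} (hy : y ∈ shape T) (hxy : x ≠ y) :
    z ∈ shape (moveInto T x y) ↔ z = x ∨ z ≠ y ∧ z ∈ shape T := by
  rw [shape_moveInto hy hxy, Finset.mem_insert, Finset.mem_erase]

theorem insert_shape_moveInto (hy : y ∈ shape T) (hxy : x ≠ y) :
    insert y (shape (moveInto T x y)) = insert x (shape T) := by
  rw [shape_moveInto hy hxy, Finset.insert_comm, Finset.insert_erase hy]

theorem mem_shape_window :
    x ∈ shape (window a m T) ↔ x ∈ shape T ∧ a < lab T x ∧ lab T x ≤ a + m := by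
  cases hx : T x <;> simp [mem_shape, window, lab, hx]

theorem mem_shape_outside :
    x ∈ shape (outside a m T) ↔ x ∈ shape T ∧ ¬ (a < lab T x ∧ lab T x ≤ a + m) := by
  cases hx : T x <;> simp [mem_shape, outside, lab, hx]

theorem shape_eq_outside_union_window (a m : ℕ) (T : Λ → Option ℕ) :
    shape T = shape (outside a m T) ∪ shape (window a m T) := by
  ext x
  simp only [Finset.mem_union, mem_shape_outside, mem_shape_window]
  tauto

theorem apply_eq_of_outside_eq {T' : Λ → Option ℕ} (ho : outside a m T = outside a m T')
    (hx : x ∈ shape T) (hi : ¬ (a < lab T x ∧ lab T x ≤ a + m)) : T' x = T x := by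
  have key := congrFun ho x
  simp only [outside, eq_some_lab hx, Option.bind_some, if_neg hi] at key
  rw [eq_some_lab hx]
  cases hx' : T' x with
  | none => simp [hx'] at key
  | some j =>
    simp only [hx', Option.bind_some] at key
    split_ifs at key
    simp_all

end Fillings

section Slides

variable {Λ : Type} [Fintype Λ] [PartialOrder Λ] {T S S' P Q : Λ → Option ℕ} {x y h : Λ}

structure IsIncreasing (P : Λ → Option ℕ) : Prop where
  strictMonoOn : StrictMonoOn (lab P) (shape P)
  injOn : Set.InjOn (lab P) (shape P)

def upCovers (T : Λ → Option ℕ) (x : Λ) : Finset Λ := (shape T).filter fun y => x ⋖ y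

def downCovers (T : Λ → Option ℕ) (x : Λ) : Finset Λ := (shape T).filter fun y => y ⋖ x

theorem mem_upCovers : y ∈ upCovers T x ↔ y ∈ shape T ∧ x ⋖ y := by
  simp [upCovers]

theorem mem_downCovers : y ∈ downCovers T x ↔ y ∈ shape T ∧ y ⋖ x := by
  simp [downCovers]

theorem slideAux_succ (n : ℕ) (T : Λ → Option ℕ) (x : Λ) :
    slideAux (n + 1) T x =
      if hc : (upCovers T x).Nonempty then
        slideAux n (moveInto T x (pickMinBy (lab T) (upCovers T x) hc))
          (pickMinBy (lab T) (upCovers T x) hc)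
      else T := rfl

theorem revSlideAux_succ (n : ℕ) (T : Λ → Option ℕ) (x : Λ) :
    revSlideAux (n + 1) T x =
      if hc : (downCovers T x).Nonempty then
        revSlideAux n (moveInto T x (pickMaxBy (lab T) (downCovers T x) hc))
          (pickMaxBy (lab T) (downCovers T x) hc)
      else T := rfl

def numAbove (x : Λ) : ℕ := (Finset.univ.filter (x < ·)).card

def numBelow (x : Λ) : ℕ := (Finset.univ.filter (· < x)).card

theorem numAbove_lt_of_lt (hxy : x < y) : numAbove y < numAbove x := by
  refine Finset.card_lt_card ((Finset.ssubset_iff_of_subset fun z hz => ?_).2 ⟨y, ?_, ?_⟩)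
  all_goals simp_all [hxy.trans]

theorem numBelow_lt_of_lt (hxy : x < y) : numBelow x < numBelow y := by
  refine Finset.card_lt_card ((Finset.ssubset_iff_of_subset fun z hz => ?_).2 ⟨x, ?_, ?_⟩)
  all_goals simp_all [lt_trans _ hxy]

theorem numAbove_lt_card (x : Λ) : numAbove x < Fintype.card Λ :=
  Finset.card_lt_card ⟨Finset.subset_univ _, fun hsub => by simpa using hsub (Finset.mem_univ x)⟩

theorem numBelow_lt_card (x : Λ) : numBelow x < Fintype.card Λ :=
  Finset.card_lt_card ⟨Finset.subset_univ _, fun hsub => by simpa using hsub (Finset.mem_univ x)⟩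

theorem slideAux_of_not_nonempty (n : ℕ) (hc : ¬ (upCovers T x).Nonempty) :
    slideAux n T x = T := by
  cases n
  · rfl
  · exact dif_neg hc

theorem revSlideAux_of_not_nonempty (n : ℕ) (hc : ¬ (downCovers T x).Nonempty) :
    revSlideAux n T x = T := by
  cases n
  · rfl
  · exact dif_neg hc

theorem slideAux_succ_of_numAbove_le {n : ℕ} (hn : numAbove x ≤ n) :
    slideAux (n + 1) T x = slideAux n T x := by
  induction n generalizing T x with
  | zero =>
    have hc : ¬ (upCovers T x).Nonempty := fun ⟨y, hy⟩ => by
      have := numAbove_lt_of_lt (mem_upCovers.1 hy).2.lt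
      omega
    simp only [slideAux_of_not_nonempty _ hc]
  | succ n ih =>
    by_cases hc : (upCovers T x).Nonempty
    · have := numAbove_lt_of_lt (mem_upCovers.1 (pickMinBy_mem (lab T) _ hc)).2.lt
      rw [slideAux_succ (n + 1) T x, dif_pos hc, slideAux_succ n T x, dif_pos hc]
      exact ih (by omega)
    · simp only [slideAux_of_not_nonempty _ hc]

theorem revSlideAux_succ_of_numBelow_le {n : ℕ} (hn : numBelow x ≤ n) :
    revSlideAux (n + 1) T x = revSlideAux n T x := by
  induction n generalizing T x with
  | zero =>
    have hc : ¬ (downCovers T x).Nonempty := fun ⟨y, hy⟩ => by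
      have := numBelow_lt_of_lt (mem_downCovers.1 hy).2.lt
      omega
    simp only [revSlideAux_of_not_nonempty _ hc]
  | succ n ih =>
    by_cases hc : (downCovers T x).Nonempty
    · have := numBelow_lt_of_lt (mem_downCovers.1 (pickMaxBy_mem (lab T) _ hc)).2.lt
      rw [revSlideAux_succ (n + 1) T x, dif_pos hc, revSlideAux_succ n T x, dif_pos hc]
      exact ih (by omega)
    · simp only [revSlideAux_of_not_nonempty _ hc]

def slide (T : Λ → Option ℕ) (x : Λ) : Λ → Option ℕ := slideAux (Fintype.card Λ) T x

def revSlide (T : Λ → Option ℕ) (x : Λ) : Λ → Option ℕ := revSlideAux (Fintype.card Λ) T x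

theorem slideAux_eq_slide {n : ℕ} (hn : numAbove x ≤ n) : slideAux n T x = slide T x := by
  have key (k : ℕ) : slideAux (numAbove x + k) T x = slideAux (numAbove x) T x := by
    induction k with
    | zero => rfl
    | succ k ih => rw [← add_assoc, slideAux_succ_of_numAbove_le (by omega), ih]
  obtain ⟨k, rfl⟩ := Nat.exists_eq_add_of_le hn
  obtain ⟨l, hl⟩ := Nat.exists_eq_add_of_le (numAbove_lt_card x).le
  rw [slide, hl, key, key]

theorem revSlideAux_eq_revSlide {n : ℕ} (hn : numBelow x ≤ n) :
    revSlideAux n T x = revSlide T x := by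
  have key (k : ℕ) : revSlideAux (numBelow x + k) T x = revSlideAux (numBelow x) T x := by
    induction k with
    | zero => rfl
    | succ k ih => rw [← add_assoc, revSlideAux_succ_of_numBelow_le (by omega), ih]
  obtain ⟨k, rfl⟩ := Nat.exists_eq_add_of_le hn
  obtain ⟨l, hl⟩ := Nat.exists_eq_add_of_le (numBelow_lt_card x).le
  rw [revSlide, hl, key, key]

theorem slide_of_not_nonempty (hc : ¬ (upCovers T x).Nonempty) : slide T x = T :=
  slideAux_of_not_nonempty _ hc

theorem revSlide_of_not_nonempty (hc : ¬ (downCovers T x).Nonempty) : revSlide T x = T :=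
  revSlideAux_of_not_nonempty _ hc

theorem slide_eq_slide_moveInto (hT : IsIncreasing T) (hy : y ∈ upCovers T x)
    (hmin : ∀ c ∈ upCovers T x, lab T y ≤ lab T c) : slide T x = slide (moveInto T x y) y := by
  have hc : (upCovers T x).Nonempty := ⟨y, hy⟩
  have hpick : pickMinBy (lab T) (upCovers T x) hc = y := by
    obtain ⟨hp, hpmin⟩ := (Finset.exists_min_image _ (lab T) hc).choose_spec
    exact hT.injOn (mem_upCovers.1 hp).1 (mem_upCovers.1 hy).1
      (le_antisymm (hpmin y hy) (hmin _ hp))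
  have := numAbove_lt_of_lt (mem_upCovers.1 hy).2.lt
  obtain ⟨n, hn⟩ := Nat.exists_eq_add_of_lt (numAbove_lt_card x)
  rw [slide, hn, slideAux_succ, dif_pos hc, hpick, slideAux_eq_slide (by omega)]

theorem revSlide_eq_revSlide_moveInto (hT : IsIncreasing T) (hy : y ∈ downCovers T x)
    (hmax : ∀ c ∈ downCovers T x, lab T c ≤ lab T y) :
    revSlide T x = revSlide (moveInto T x y) y := by
  have hc : (downCovers T x).Nonempty := ⟨y, hy⟩
  have hpick : pickMaxBy (lab T) (downCovers T x) hc = y := by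
    obtain ⟨hp, hpmax⟩ := (Finset.exists_max_image _ (lab T) hc).choose_spec
    exact hT.injOn (mem_downCovers.1 hp).1 (mem_downCovers.1 hy).1
      (le_antisymm (hmax _ hp) (hpmax y hy))
  have := numBelow_lt_of_lt (mem_downCovers.1 hy).2.lt
  obtain ⟨n, hn⟩ := Nat.exists_eq_add_of_lt (numBelow_lt_card x)
  rw [revSlide, hn, revSlideAux_succ, dif_pos hc, hpick, revSlideAux_eq_revSlide (by omega)]

theorem jdt_of_innerAdmissible (hx : InnerAdmissible T x) : jdt x T = slide T x := if_pos hx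

theorem revjdt_of_outerAdmissible (hx : OuterAdmissible T x) : revjdt x T = revSlide T x :=
  if_pos hx

theorem IsIncreasing.moveInto (hT : IsIncreasing T) (hy : y ∈ shape T) (hxy : x ≠ y)
    (hbelow : ∀ u ∈ shape T, u ≠ y → u < x → lab T u < lab T y)
    (habove : ∀ v ∈ shape T, v ≠ y → x < v → lab T y < lab T v) :
    IsIncreasing (_root_.moveInto T x y) := by
  have key : ∀ {u}, u ∈ shape (_root_.moveInto T x y) → u ≠ x → u ≠ y ∧ u ∈ shape T :=
    fun hu hux => ((mem_shape_moveInto hy hxy).1 hu).resolve_left hux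
  constructor
  · intro u hu v hv huv
    by_cases hux : u = x
    · subst hux
      obtain ⟨hvy, hvT⟩ := key hv huv.ne'
      rw [lab_moveInto_self, lab_moveInto_of_ne huv.ne' hvy]
      exact habove v hvT hvy huv
    obtain ⟨huy, huT⟩ := key hu hux
    rw [lab_moveInto_of_ne hux huy]
    by_cases hvx : v = x
    · subst hvx
      rw [lab_moveInto_self]
      exact hbelow u huT huy huv
    obtain ⟨hvy, hvT⟩ := key hv hvx
    rw [lab_moveInto_of_ne hvx hvy]
    exact hT.strictMonoOn huT hvT huv
  · intro u hu v hv huv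
    by_cases hux : u = x <;> by_cases hvx : v = x
    · rw [hux, hvx]
    · obtain ⟨hvy, hvT⟩ := key hv hvx
      rw [hux, lab_moveInto_self, lab_moveInto_of_ne hvx hvy] at huv
      exact absurd (hT.injOn hy hvT huv).symm hvy
    · obtain ⟨huy, huT⟩ := key hu hux
      rw [hvx, lab_moveInto_self, lab_moveInto_of_ne hux huy] at huv
      exact absurd (hT.injOn huT hy huv) huy
    · obtain ⟨huy, huT⟩ := key hu hux
      obtain ⟨hvy, hvT⟩ := key hv hvx
      rw [lab_moveInto_of_ne hux huy, lab_moveInto_of_ne hvx hvy] at huv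
      exact hT.injOn huT hvT huv

variable {P₀ Q₀ : Λ → Option ℕ} {x₀ : Λ}

/-- An intermediate stage of the slide of `P₀` into `x₀`, the hole being at `h`. -/
structure IsSlideState (P₀ : Λ → Option ℕ) (x₀ : Λ) (S : Λ → Option ℕ) (h : Λ) : Prop where
  hole : S h = none
  le : x₀ ≤ h
  eq_of_not_le : ∀ z, ¬ z ≤ h → S z = P₀ z
  increasing : IsIncreasing S

structure IsRevSlideState (P₀ : Λ → Option ℕ) (x₀ : Λ) (S : Λ → Option ℕ) (h : Λ) : Prop where
  hole : S h = none
  le : h ≤ x₀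
  eq_of_not_le : ∀ z, ¬ h ≤ z → S z = P₀ z
  increasing : IsIncreasing S

theorem IsSlideState.start (hP : IsIncreasing P₀) (hx : InnerAdmissible P₀ x₀) :
    IsSlideState P₀ x₀ P₀ x₀ :=
  ⟨hx.1, le_rfl, fun _ _ => rfl, hP⟩

theorem IsRevSlideState.start (hP : IsIncreasing P₀) (hx : OuterAdmissible P₀ x₀) :
    IsRevSlideState P₀ x₀ P₀ x₀ :=
  ⟨hx.1, le_rfl, fun _ _ => rfl, hP⟩

/-- Boxes not below the hole are untouched, so a vacancy there under an entry would contradict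
the maximality of the admissible box `x₀`. -/
theorem IsSlideState.mem_shape_of_lt (hx : InnerAdmissible P₀ x₀) (G : IsSlideState P₀ x₀ S h)
    {w v : Λ} (hw : h < w) (hwv : w < v) (hv : v ∈ shape S) : w ∈ shape S := by
  by_contra hSw
  have hPw : P₀ w = none := by
    rw [← G.eq_of_not_le w hw.not_ge, ← notMem_shape]; exact hSw
  have hPv : v ∈ shape P₀ := by
    rwa [mem_shape, ← G.eq_of_not_le v (hw.trans hwv).not_ge, ← mem_shape]
  exact hx.2.2 w hPw ⟨v, hPv, hwv⟩ (G.le.trans_lt hw)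

theorem IsRevSlideState.mem_shape_of_lt (hx : OuterAdmissible P₀ x₀)
    (G : IsRevSlideState P₀ x₀ S h) {w v : Λ} (hw : w < h) (hvw : v < w) (hv : v ∈ shape S) :
    w ∈ shape S := by
  by_contra hSw
  have hPw : P₀ w = none := by
    rw [← G.eq_of_not_le w hw.not_ge, ← notMem_shape]; exact hSw
  have hPv : v ∈ shape P₀ := by
    rwa [mem_shape, ← G.eq_of_not_le v (hvw.trans hw).not_ge, ← mem_shape]
  exact hx.2.2 w hPw ⟨v, hPv, hvw⟩ (hw.trans_le G.le)

theorem IsSlideState.lab_lt_of_lt (hx : InnerAdmissible P₀ x₀) (G : IsSlideState P₀ x₀ S h)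
    (hy : y ∈ upCovers S h) (hmin : ∀ c ∈ upCovers S h, lab S y ≤ lab S c) {v : Λ}
    (hv : v ∈ shape S) (hvy : v ≠ y) (hhv : h < v) : lab S y < lab S v := by
  obtain ⟨w, hhw, hwv⟩ := exists_covBy_le_of_lt hhv
  rcases hwv.eq_or_lt with rfl | hwv
  · exact (hmin w (mem_upCovers.2 ⟨hv, hhw⟩)).lt_of_ne
      fun heq => hvy (G.increasing.injOn hv (mem_upCovers.1 hy).1 heq.symm)
  · have hw := G.mem_shape_of_lt hx hhw.lt hwv hv
    exact (hmin w (mem_upCovers.2 ⟨hw, hhw⟩)).trans_lt (G.increasing.strictMonoOn hw hv hwv)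

theorem IsRevSlideState.lt_lab_of_lt (hx : OuterAdmissible P₀ x₀)
    (G : IsRevSlideState P₀ x₀ S h) (hy : y ∈ downCovers S h)
    (hmax : ∀ c ∈ downCovers S h, lab S c ≤ lab S y) {u : Λ}
    (hu : u ∈ shape S) (huy : u ≠ y) (huh : u < h) : lab S u < lab S y := by
  obtain ⟨w, huw, hwh⟩ := exists_le_covBy_of_lt huh
  rcases huw.eq_or_lt with rfl | huw
  · exact (hmax u (mem_downCovers.2 ⟨hu, hwh⟩)).lt_of_ne
      fun heq => huy (G.increasing.injOn hu (mem_downCovers.1 hy).1 heq)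
  · have hw := G.mem_shape_of_lt hx hwh.lt huw hu
    exact (G.increasing.strictMonoOn hu hw huw).trans_le (hmax w (mem_downCovers.2 ⟨hw, hwh⟩))

theorem IsSlideState.step (hx : InnerAdmissible P₀ x₀) (G : IsSlideState P₀ x₀ S h)
    (hy : y ∈ upCovers S h) (hmin : ∀ c ∈ upCovers S h, lab S y ≤ lab S c) :
    IsSlideState P₀ x₀ (moveInto S h y) y := by
  obtain ⟨hyS, hhy⟩ := mem_upCovers.1 hy
  refine ⟨by simp [_root_.moveInto, hhy.lt.ne'], G.le.trans hhy.le, fun z hz => ?_, ?_⟩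
  · rw [moveInto_of_ne (by rintro rfl; exact hz hhy.le) (by rintro rfl; exact hz le_rfl)]
    exact G.eq_of_not_le z fun hzh => hz (hzh.trans hhy.le)
  · refine G.increasing.moveInto hyS hhy.lt.ne (fun u hu huy huh => ?_) fun v hv hvy hhv => ?_
    · exact G.increasing.strictMonoOn hu hyS (huh.trans hhy.lt)
    · exact G.lab_lt_of_lt hx hy hmin hv hvy hhv

theorem IsRevSlideState.step (hx : OuterAdmissible P₀ x₀) (G : IsRevSlideState P₀ x₀ S h)
    (hy : y ∈ downCovers S h) (hmax : ∀ c ∈ downCovers S h, lab S c ≤ lab S y) :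
    IsRevSlideState P₀ x₀ (moveInto S h y) y := by
  obtain ⟨hyS, hyh⟩ := mem_downCovers.1 hy
  refine ⟨by simp [_root_.moveInto, hyh.lt.ne], hyh.le.trans G.le, fun z hz => ?_, ?_⟩
  · rw [moveInto_of_ne (by rintro rfl; exact hz hyh.le) (by rintro rfl; exact hz le_rfl)]
    exact G.eq_of_not_le z fun hhz => hz (hyh.le.trans hhz)
  · refine G.increasing.moveInto hyS hyh.lt.ne' (fun u hu huy huh => ?_) fun v hv hvy hhv => ?_
    · exact G.lt_lab_of_lt hx hy hmax hu huy huh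
    · exact G.increasing.strictMonoOn hyS hv (hyh.lt.trans hhv)

theorem IsSlideState.increasing_slide (hx : InnerAdmissible P₀ x₀) (G : IsSlideState P₀ x₀ S h) :
    IsIncreasing (slide S h) := by
  induction h using WellFoundedGT.induction generalizing S with
  | _ h ih =>
  by_cases hc : (upCovers S h).Nonempty
  · obtain ⟨y, hy, hmin⟩ := Finset.exists_min_image _ (lab S) hc
    rw [slide_eq_slide_moveInto G.increasing hy hmin]
    exact ih y (mem_upCovers.1 hy).2.lt (G.step hx hy hmin)
  · rw [slide_of_not_nonempty hc]
    exact G.increasing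

theorem IsRevSlideState.increasing_revSlide (hx : OuterAdmissible P₀ x₀)
    (G : IsRevSlideState P₀ x₀ S h) : IsIncreasing (revSlide S h) := by
  induction h using WellFoundedLT.induction generalizing S with
  | _ h ih =>
  by_cases hc : (downCovers S h).Nonempty
  · obtain ⟨y, hy, hmax⟩ := Finset.exists_max_image _ (lab S) hc
    rw [revSlide_eq_revSlide_moveInto G.increasing hy hmax]
    exact ih y (mem_downCovers.1 hy).2.lt (G.step hx hy hmax)
  · rw [revSlide_of_not_nonempty hc]
    exact G.increasing

theorem IsIncreasing.jdt (hP : IsIncreasing P) (x : Λ) : IsIncreasing (jdt x P) := by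
  by_cases hx : InnerAdmissible P x
  · rw [jdt_of_innerAdmissible hx]
    exact (IsSlideState.start hP hx).increasing_slide hx
  · rwa [_root_.jdt, if_neg hx]

theorem IsIncreasing.revjdt (hP : IsIncreasing P) (x : Λ) : IsIncreasing (revjdt x P) := by
  by_cases hx : OuterAdmissible P x
  · rw [revjdt_of_outerAdmissible hx]
    exact (IsRevSlideState.start hP hx).increasing_revSlide hx
  · rwa [_root_.revjdt, if_neg hx]

theorem innerAdmissible_congr (hPQ : shape P = shape Q) :
    InnerAdmissible P x ↔ InnerAdmissible Q x := by
  simp only [InnerAdmissible, ← notMem_shape, hPQ]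

theorem outerAdmissible_congr (hPQ : shape P = shape Q) :
    OuterAdmissible P x ↔ OuterAdmissible Q x := by
  simp only [OuterAdmissible, ← notMem_shape, hPQ]

theorem DualEquiv.jdt (hPQ : DualEquiv P Q) (x : Λ) : DualEquiv (jdt x P) (jdt x Q) :=
  ⟨hPQ.2 [(true, x)], fun s => hPQ.2 ((true, x) :: s)⟩

theorem DualEquiv.revjdt (hPQ : DualEquiv P Q) (x : Λ) : DualEquiv (revjdt x P) (revjdt x Q) :=
  ⟨hPQ.2 [(false, x)], fun s => hPQ.2 ((false, x) :: s)⟩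

section Window

variable {a m : ℕ}

theorem IsIncreasing.window (hT : IsIncreasing T) : IsIncreasing (_root_.window a m T) := by
  have key : ∀ {u}, u ∈ shape (_root_.window a m T) →
      u ∈ shape T ∧ a < lab T u ∧ lab (_root_.window a m T) u = lab T u - a := fun hu => by
    obtain ⟨huT, hua, hum⟩ := mem_shape_window.1 hu
    exact ⟨huT, hua, lab_window hum⟩
  constructor
  · intro u hu v hv huv
    obtain ⟨huT, hua, hu⟩ := key hu
    obtain ⟨hvT, hva, hv⟩ := key hv
    have := hT.strictMonoOn huT hvT huv
    omega
  · intro u hu v hv huv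
    obtain ⟨huT, hua, hu⟩ := key hu
    obtain ⟨hvT, hva, hv⟩ := key hv
    exact hT.injOn huT hvT (by omega)

theorem IsSlideState.innerAdmissible_window (hx : InnerAdmissible P₀ x₀)
    (G : IsSlideState P₀ x₀ S h) (habove : ∀ c ∈ upCovers S h, a < lab S c) {w : Λ}
    (hw : w ∈ upCovers S h) (hwm : lab S w ≤ a + m) : InnerAdmissible (window a m S) h := by
  obtain ⟨hwS, hhw⟩ := mem_upCovers.1 hw
  refine ⟨by simp [window, G.hole], ⟨w, mem_shape_window.2 ⟨hwS, habove w hw, hwm⟩, hhw.lt⟩, ?_⟩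
  rintro z hz ⟨v, hv, hzv⟩ hhz
  obtain ⟨hvS, -, hvm⟩ := mem_shape_window.1 hv
  have hzS := G.mem_shape_of_lt hx hhz hzv hvS
  have hzv' := G.increasing.strictMonoOn hzS hvS hzv
  have hza : lab S z ≤ a := by
    by_contra hza
    exact (mem_shape_window.not.1 (notMem_shape.2 hz)) ⟨hzS, by omega, by omega⟩
  obtain ⟨c, hhc, hcz⟩ := exists_covBy_le_of_lt hhz
  have hcS : c ∈ shape S := by
    rcases hcz.eq_or_lt with rfl | hcz
    · exact hzS
    · exact G.mem_shape_of_lt hx hhc.lt hcz hzS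
  have := habove c (mem_upCovers.2 ⟨hcS, hhc⟩)
  have := G.increasing.strictMonoOn.monotoneOn hcS hzS hcz
  omega

theorem IsRevSlideState.outerAdmissible_window (hx : OuterAdmissible P₀ x₀)
    (G : IsRevSlideState P₀ x₀ S h) (hbelow : ∀ c ∈ downCovers S h, lab S c ≤ a + m) {w : Λ}
    (hw : w ∈ downCovers S h) (hwa : a < lab S w) : OuterAdmissible (window a m S) h := by
  obtain ⟨hwS, hwh⟩ := mem_downCovers.1 hw
  refine ⟨by simp [window, G.hole], ⟨w, mem_shape_window.2 ⟨hwS, hwa, hbelow w hw⟩, hwh.lt⟩, ?_⟩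
  rintro z hz ⟨v, hv, hvz⟩ hzh
  obtain ⟨hvS, hva, -⟩ := mem_shape_window.1 hv
  have hzS := G.mem_shape_of_lt hx hzh hvz hvS
  have hvz' := G.increasing.strictMonoOn hvS hzS hvz
  have hzm : a + m < lab S z := by
    by_contra hzm
    exact (mem_shape_window.not.1 (notMem_shape.2 hz)) ⟨hzS, by omega, by omega⟩
  obtain ⟨c, hzc, hch⟩ := exists_le_covBy_of_lt hzh
  have hcS : c ∈ shape S := by
    rcases hzc.eq_or_lt with rfl | hzc
    · exact hzS
    · exact G.mem_shape_of_lt hx hch.lt hzc hzS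
  have := hbelow c (mem_downCovers.2 ⟨hcS, hch⟩)
  have := G.increasing.strictMonoOn.monotoneOn hzS hcS hzc
  omega

/-- Once the hole has passed the entries below the window, the slide runs through the window
exactly as the slide of the window alone, and leaves it at a box `e`. -/
theorem IsSlideState.exists_window_exit (hx : InnerAdmissible P₀ x₀)
    (G : IsSlideState P₀ x₀ S h) (habove : ∀ c ∈ upCovers S h, a < lab S c) :
    ∃ e Sₑ, slide S h = slide Sₑ e ∧ IsSlideState P₀ x₀ Sₑ e ∧ h ≤ e ∧
      outside a m Sₑ = outside a m S ∧ window a m Sₑ = slide (window a m S) h ∧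
      e ∈ insert h (shape S) ∧ shape Sₑ = (insert h (shape S)).erase e ∧
      ((∃ c ∈ upCovers S h, lab S c ≤ a + m) → h < e) := by
  induction h using WellFoundedGT.induction generalizing S with
  | _ h ih =>
  by_cases hwin : ∃ c ∈ upCovers S h, lab S c ≤ a + m
  · obtain ⟨c, hc, hcm⟩ := hwin
    obtain ⟨y, hy, hmin⟩ := Finset.exists_min_image _ (lab S) ⟨c, hc⟩
    obtain ⟨hyS, hhy⟩ := mem_upCovers.1 hy
    have hyw : a < lab S y ∧ lab S y ≤ a + m := ⟨habove y hy, (hmin c hc).trans hcm⟩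
    have habove₁ : ∀ c ∈ upCovers (moveInto S h y) y, a < lab (moveInto S h y) c := by
      intro c hc
      obtain ⟨hcS₁, hyc⟩ := mem_upCovers.1 hc
      have hch : c ≠ h := (hhy.lt.trans hyc.lt).ne'
      rw [lab_moveInto_of_ne hch hyc.lt.ne']
      have hcS := (((mem_shape_moveInto hyS hhy.lt.ne).1 hcS₁).resolve_left hch).2
      exact hyw.1.trans (G.increasing.strictMonoOn hyS hcS hyc.lt)
    obtain ⟨e, Sₑ, hslide, Gₑ, hye, hout, hwinₑ, he, hsh, -⟩ :=
      ih y hhy.lt (G.step hx hy hmin) habove₁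
    have hWy : y ∈ upCovers (window a m S) h :=
      mem_upCovers.2 ⟨mem_shape_window.2 ⟨hyS, hyw⟩, hhy⟩
    have hWmin : ∀ c ∈ upCovers (window a m S) h, lab (window a m S) y ≤ lab (window a m S) c := by
      intro c hc
      obtain ⟨hcW, hhc⟩ := mem_upCovers.1 hc
      obtain ⟨hcS, -, hcm⟩ := mem_shape_window.1 hcW
      rw [lab_window hyw.2, lab_window hcm]
      exact Nat.sub_le_sub_right (hmin c (mem_upCovers.2 ⟨hcS, hhc⟩)) a
    rw [insert_shape_moveInto hyS hhy.lt.ne] at he hsh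
    refine ⟨e, Sₑ, (slide_eq_slide_moveInto G.increasing hy hmin).trans hslide, Gₑ,
      hhy.le.trans hye, ?_, ?_, he, hsh, fun _ => hhy.lt.trans_le hye⟩
    · rw [hout, outside_moveInto, moveInto_eq_self]
      · simp [outside, G.hole]
      · simp [outside, eq_some_lab hyS, hyw]
    · rw [hwinₑ, window_moveInto,
        slide_eq_slide_moveInto G.increasing.window hWy hWmin]
  · simp only [not_exists, not_and, not_le] at hwin
    have hW : ¬ (upCovers (window a m S) h).Nonempty := by
      rintro ⟨c, hc⟩
      obtain ⟨hcW, hhc⟩ := mem_upCovers.1 hc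
      obtain ⟨hcS, -, hcm⟩ := mem_shape_window.1 hcW
      exact (hwin c (mem_upCovers.2 ⟨hcS, hhc⟩)).not_ge hcm
    refine ⟨h, S, rfl, G, le_rfl, rfl, (slide_of_not_nonempty hW).symm,
      Finset.mem_insert_self _ _, (Finset.erase_insert (notMem_shape.2 G.hole)).symm,
      fun ⟨c, hc, hcm⟩ => ((hwin c hc).not_ge hcm).elim⟩

theorem IsRevSlideState.exists_window_exit (hx : OuterAdmissible P₀ x₀)
    (G : IsRevSlideState P₀ x₀ S h) (hbelow : ∀ c ∈ downCovers S h, lab S c ≤ a + m) :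
    ∃ e Sₑ, revSlide S h = revSlide Sₑ e ∧ IsRevSlideState P₀ x₀ Sₑ e ∧ e ≤ h ∧
      outside a m Sₑ = outside a m S ∧ window a m Sₑ = revSlide (window a m S) h ∧
      e ∈ insert h (shape S) ∧ shape Sₑ = (insert h (shape S)).erase e ∧
      ((∃ c ∈ downCovers S h, a < lab S c) → e < h) := by
  induction h using WellFoundedLT.induction generalizing S with
  | _ h ih =>
  by_cases hwin : ∃ c ∈ downCovers S h, a < lab S c
  · obtain ⟨c, hc, hca⟩ := hwin
    obtain ⟨y, hy, hmax⟩ := Finset.exists_max_image _ (lab S) ⟨c, hc⟩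
    obtain ⟨hyS, hyh⟩ := mem_downCovers.1 hy
    have hyw : a < lab S y ∧ lab S y ≤ a + m := ⟨hca.trans_le (hmax c hc), hbelow y hy⟩
    have hbelow₁ : ∀ c ∈ downCovers (moveInto S h y) y, lab (moveInto S h y) c ≤ a + m := by
      intro c hc
      obtain ⟨hcS₁, hcy⟩ := mem_downCovers.1 hc
      have hch : c ≠ h := (hcy.lt.trans hyh.lt).ne
      rw [lab_moveInto_of_ne hch hcy.lt.ne]
      have hcS := (((mem_shape_moveInto hyS hyh.lt.ne').1 hcS₁).resolve_left hch).2
      exact (G.increasing.strictMonoOn hcS hyS hcy.lt).le.trans hyw.2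
    obtain ⟨e, Sₑ, hslide, Gₑ, hey, hout, hwinₑ, he, hsh, -⟩ :=
      ih y hyh.lt (G.step hx hy hmax) hbelow₁
    have hWy : y ∈ downCovers (window a m S) h :=
      mem_downCovers.2 ⟨mem_shape_window.2 ⟨hyS, hyw⟩, hyh⟩
    have hWmax : ∀ c ∈ downCovers (window a m S) h,
        lab (window a m S) c ≤ lab (window a m S) y := by
      intro c hc
      obtain ⟨hcW, hch⟩ := mem_downCovers.1 hc
      obtain ⟨hcS, -, hcm⟩ := mem_shape_window.1 hcW
      rw [lab_window hyw.2, lab_window hcm]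
      exact Nat.sub_le_sub_right (hmax c (mem_downCovers.2 ⟨hcS, hch⟩)) a
    rw [insert_shape_moveInto hyS hyh.lt.ne'] at he hsh
    refine ⟨e, Sₑ, (revSlide_eq_revSlide_moveInto G.increasing hy hmax).trans hslide, Gₑ,
      hey.trans hyh.le, ?_, ?_, he, hsh, fun _ => hey.trans_lt hyh.lt⟩
    · rw [hout, outside_moveInto, moveInto_eq_self]
      · simp [outside, G.hole]
      · simp [outside, eq_some_lab hyS, hyw]
    · rw [hwinₑ, window_moveInto,
        revSlide_eq_revSlide_moveInto G.increasing.window hWy hWmax]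
  · simp only [not_exists, not_and, not_lt] at hwin
    have hW : ¬ (downCovers (window a m S) h).Nonempty := by
      rintro ⟨c, hc⟩
      obtain ⟨hcW, hch⟩ := mem_downCovers.1 hc
      obtain ⟨hcS, hca, -⟩ := mem_shape_window.1 hcW
      exact (hwin c (mem_downCovers.2 ⟨hcS, hch⟩)).not_gt hca
    refine ⟨h, S, rfl, G, le_rfl, rfl, (revSlide_of_not_nonempty hW).symm,
      Finset.mem_insert_self _ _, (Finset.erase_insert (notMem_shape.2 G.hole)).symm,
      fun ⟨c, hc, hca⟩ => ((hwin c hc).not_gt hca).elim⟩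

structure WindowEquiv (a m : ℕ) (P Q : Λ → Option ℕ) : Prop where
  outside_eq : outside a m P = outside a m Q
  window_dualEquiv : DualEquiv (window a m P) (window a m Q)

theorem WindowEquiv.shape_eq (R : WindowEquiv a m P Q) : shape P = shape Q := by
  rw [shape_eq_outside_union_window a m P, shape_eq_outside_union_window a m Q, R.outside_eq,
    R.window_dualEquiv.1]

theorem WindowEquiv.lab_eq_or_mem_window (R : WindowEquiv a m P Q) (hx : x ∈ shape Q) :
    lab P x = lab Q x ∨ (a < lab P x ∧ lab P x ≤ a + m) ∧ (a < lab Q x ∧ lab Q x ≤ a + m) := by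
  by_cases hQx : a < lab Q x ∧ lab Q x ≤ a + m
  · have hPx := R.window_dualEquiv.1 ▸ mem_shape_window.2 ⟨hx, hQx⟩
    exact Or.inr ⟨(mem_shape_window.1 hPx).2, hQx⟩
  · exact Or.inl (congrArg (Option.getD · 0) (apply_eq_of_outside_eq R.outside_eq.symm hx hQx))

theorem WindowEquiv.moveInto (R : WindowEquiv a m S S') (hS : S x = none) (hS' : S' x = none)
    (hyw : ¬ (a < lab S y ∧ lab S y ≤ a + m)) :
    WindowEquiv a m (moveInto S x y) (moveInto S' x y) := by
  have hSy : y ∉ shape (window a m S) := fun h => hyw (mem_shape_window.1 h).2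
  have hS'y : y ∉ shape (window a m S') := R.window_dualEquiv.1 ▸ hSy
  refine ⟨by rw [outside_moveInto, outside_moveInto, R.outside_eq], ?_⟩
  have hx : ∀ {T : Λ → Option ℕ}, T x = none → window a m T x = none := fun h => by
    simp [window, h]
  rw [window_moveInto, window_moveInto, moveInto_eq_self (hx hS) (notMem_shape.1 hSy),
    moveInto_eq_self (hx hS') (notMem_shape.1 hS'y)]
  exact R.window_dualEquiv

theorem WindowEquiv.slide (hP : InnerAdmissible P₀ x₀) (hQ : InnerAdmissible Q₀ x₀)
    (G : IsSlideState P₀ x₀ S h) (G' : IsSlideState Q₀ x₀ S' h) (R : WindowEquiv a m S S') :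
    WindowEquiv a m (slide S h) (slide S' h) := by
  induction h using WellFoundedGT.induction generalizing S S' with
  | _ h ih =>
  have hcov : upCovers S h = upCovers S' h := by rw [upCovers, upCovers, R.shape_eq]
  by_cases hc : (upCovers S h).Nonempty
  swap
  · rwa [slide_of_not_nonempty hc, slide_of_not_nonempty (hcov ▸ hc)]
  obtain ⟨y, hy, hmin⟩ := Finset.exists_min_image _ (lab S) hc
  have hy' : y ∈ upCovers S' h := hcov ▸ hy
  by_cases hyw : a < lab S y ∧ lab S y ≤ a + m
  · have habove : ∀ c ∈ upCovers S h, a < lab S c := fun c hc => hyw.1.trans_le (hmin c hc)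
    have habove' : ∀ c ∈ upCovers S' h, a < lab S' c := by
      intro c hc
      rcases R.lab_eq_or_mem_window (mem_upCovers.1 hc).1 with hSc | ⟨-, hS'c⟩
      · exact hSc ▸ habove c (hcov ▸ hc)
      · exact hS'c.1
    have hadm := G.innerAdmissible_window hP habove hy hyw.2
    obtain ⟨e, Sₑ, hslide, Gₑ, -, hout, hwin, he, hsh, hhe⟩ := G.exists_window_exit hP habove
    obtain ⟨e', S'ₑ, hslide', G'ₑ, -, hout', hwin', -, hsh', -⟩ :=
      G'.exists_window_exit hQ habove' (m := m)
    have Rₑ : WindowEquiv a m Sₑ S'ₑ := by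
      refine ⟨by rw [hout, hout', R.outside_eq], ?_⟩
      rw [hwin, hwin', ← jdt_of_innerAdmissible hadm,
        ← jdt_of_innerAdmissible ((innerAdmissible_congr R.window_dualEquiv.1).1 hadm)]
      exact R.window_dualEquiv.jdt h
    obtain rfl : e = e' := (Finset.erase_inj _ he).1 (by rw [← hsh, Rₑ.shape_eq, hsh', R.shape_eq])
    rw [hslide, hslide']
    exact ih e (hhe ⟨y, hy, hyw.2⟩) Gₑ G'ₑ Rₑ
  · have hlab : lab S' y = lab S y := by
      rcases R.lab_eq_or_mem_window (mem_upCovers.1 hy').1 with hSy | ⟨hSy, -⟩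
      · exact hSy.symm
      · exact (hyw hSy).elim
    have hmin' : ∀ c ∈ upCovers S' h, lab S' y ≤ lab S' c := by
      intro c hc
      have := hmin c (hcov ▸ hc)
      rcases R.lab_eq_or_mem_window (mem_upCovers.1 hc).1 with hSc | ⟨hSc, hS'c⟩ <;> omega
    rw [slide_eq_slide_moveInto G.increasing hy hmin,
      slide_eq_slide_moveInto G'.increasing hy' hmin']
    exact ih y (mem_upCovers.1 hy).2.lt (G.step hP hy hmin) (G'.step hQ hy' hmin')
      (R.moveInto G.hole G'.hole hyw)

theorem WindowEquiv.revSlide (hP : OuterAdmissible P₀ x₀) (hQ : OuterAdmissible Q₀ x₀)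
    (G : IsRevSlideState P₀ x₀ S h) (G' : IsRevSlideState Q₀ x₀ S' h)
    (R : WindowEquiv a m S S') : WindowEquiv a m (revSlide S h) (revSlide S' h) := by
  induction h using WellFoundedLT.induction generalizing S S' with
  | _ h ih =>
  have hcov : downCovers S h = downCovers S' h := by rw [downCovers, downCovers, R.shape_eq]
  by_cases hc : (downCovers S h).Nonempty
  swap
  · rwa [revSlide_of_not_nonempty hc, revSlide_of_not_nonempty (hcov ▸ hc)]
  obtain ⟨y, hy, hmax⟩ := Finset.exists_max_image _ (lab S) hc
  have hy' : y ∈ downCovers S' h := hcov ▸ hy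
  by_cases hyw : a < lab S y ∧ lab S y ≤ a + m
  · have hbelow : ∀ c ∈ downCovers S h, lab S c ≤ a + m := fun c hc => (hmax c hc).trans hyw.2
    have hbelow' : ∀ c ∈ downCovers S' h, lab S' c ≤ a + m := by
      intro c hc
      rcases R.lab_eq_or_mem_window (mem_downCovers.1 hc).1 with hSc | ⟨-, hS'c⟩
      · exact hSc ▸ hbelow c (hcov ▸ hc)
      · exact hS'c.2
    have hadm := G.outerAdmissible_window hP hbelow hy hyw.1
    obtain ⟨e, Sₑ, hslide, Gₑ, -, hout, hwin, he, hsh, hhe⟩ := G.exists_window_exit hP hbelow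
    obtain ⟨e', S'ₑ, hslide', G'ₑ, -, hout', hwin', -, hsh', -⟩ :=
      G'.exists_window_exit hQ hbelow'
    have Rₑ : WindowEquiv a m Sₑ S'ₑ := by
      refine ⟨by rw [hout, hout', R.outside_eq], ?_⟩
      rw [hwin, hwin', ← revjdt_of_outerAdmissible hadm,
        ← revjdt_of_outerAdmissible ((outerAdmissible_congr R.window_dualEquiv.1).1 hadm)]
      exact R.window_dualEquiv.revjdt h
    obtain rfl : e = e' := (Finset.erase_inj _ he).1 (by rw [← hsh, Rₑ.shape_eq, hsh', R.shape_eq])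
    rw [hslide, hslide']
    exact ih e (hhe ⟨y, hy, hyw.1⟩) Gₑ G'ₑ Rₑ
  · have hlab : lab S' y = lab S y := by
      rcases R.lab_eq_or_mem_window (mem_downCovers.1 hy').1 with hSy | ⟨hSy, -⟩
      · exact hSy.symm
      · exact (hyw hSy).elim
    have hmax' : ∀ c ∈ downCovers S' h, lab S' c ≤ lab S' y := by
      intro c hc
      have := hmax c (hcov ▸ hc)
      rcases R.lab_eq_or_mem_window (mem_downCovers.1 hc).1 with hSc | ⟨hSc, hS'c⟩ <;> omega
    rw [revSlide_eq_revSlide_moveInto G.increasing hy hmax,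
      revSlide_eq_revSlide_moveInto G'.increasing hy' hmax']
    exact ih y (mem_downCovers.1 hy).2.lt (G.step hP hy hmax) (G'.step hQ hy' hmax')
      (R.moveInto G.hole G'.hole hyw)

theorem WindowEquiv.jdt (hP : IsIncreasing P) (hQ : IsIncreasing Q) (R : WindowEquiv a m P Q)
    (x : Λ) : WindowEquiv a m (jdt x P) (jdt x Q) := by
  by_cases hx : InnerAdmissible P x
  · have hx' := (innerAdmissible_congr R.shape_eq).1 hx
    rw [jdt_of_innerAdmissible hx, jdt_of_innerAdmissible hx']
    exact R.slide hx hx' (.start hP hx) (.start hQ hx')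
  · rwa [_root_.jdt, _root_.jdt, if_neg hx, if_neg ((innerAdmissible_congr R.shape_eq).not.1 hx)]

theorem WindowEquiv.revjdt (hP : IsIncreasing P) (hQ : IsIncreasing Q) (R : WindowEquiv a m P Q)
    (x : Λ) : WindowEquiv a m (revjdt x P) (revjdt x Q) := by
  by_cases hx : OuterAdmissible P x
  · have hx' := (outerAdmissible_congr R.shape_eq).1 hx
    rw [revjdt_of_outerAdmissible hx, revjdt_of_outerAdmissible hx']
    exact R.revSlide hx hx' (.start hP hx) (.start hQ hx')
  · rwa [_root_.revjdt, _root_.revjdt, if_neg hx,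
      if_neg ((outerAdmissible_congr R.shape_eq).not.1 hx)]

theorem WindowEquiv.dualEquiv (hP : IsIncreasing P) (hQ : IsIncreasing Q)
    (R : WindowEquiv a m P Q) : DualEquiv P Q := by
  refine ⟨R.shape_eq, fun s => ?_⟩
  induction s generalizing P Q with
  | nil => exact R.shape_eq
  | cons p s ih =>
    obtain ⟨_ | _, x⟩ := p
    · exact ih (hP.revjdt x) (hQ.revjdt x) (R.revjdt hP hQ x)
    · exact ih (hP.jdt x) (hQ.jdt x) (R.jdt hP hQ x)

end Window

end Slides

section Concatenation

variable {Λ : Type} [Fintype Λ] {A B C C' : Λ → Option ℕ} {x : Λ}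

theorem shape_tabConcat (A B : Λ → Option ℕ) : shape (tabConcat A B) = shape A ∪ shape B := by
  ext x
  simp only [Finset.mem_union, mem_shape]
  cases hA : A x <;> cases hB : B x <;> simp [tabConcat, hA, hB]

theorem tabConcat_of_mem (hx : x ∈ shape A) : tabConcat A B x = A x := by
  simp [tabConcat, eq_some_lab hx]

theorem tabConcat_of_notMem (hx : x ∉ shape A) :
    tabConcat A B x = (B x).map (· + (shape A).card) := by
  simp [tabConcat, notMem_shape.1 hx]

theorem lab_tabConcat_of_mem (hx : x ∈ shape A) : lab (tabConcat A B) x = lab A x := by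
  simp [lab, tabConcat_of_mem hx]

theorem lab_tabConcat_of_notMem (hx : x ∉ shape A) (hxB : x ∈ shape B) :
    lab (tabConcat A B) x = lab B x + (shape A).card := by
  obtain ⟨i, hi⟩ := mem_shape.1 hxB
  simp [lab, tabConcat_of_notMem hx, hi]

theorem outside_tabConcat_congr {a m : ℕ} (hs : shape C = shape C')
    (ho : outside a m C = outside a m C') :
    outside a m (tabConcat C B) = outside a m (tabConcat C' B) := by
  funext x
  by_cases hx : x ∈ shape C
  · have := congrFun ho x
    simp only [outside] at this ⊢
    rwa [tabConcat_of_mem hx, tabConcat_of_mem (hs ▸ hx)]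
  · simp only [outside]
    rw [tabConcat_of_notMem hx, tabConcat_of_notMem (hs ▸ hx), hs]

theorem window_tabConcat_of_le {a m : ℕ} (hB : ∀ x ∈ shape B, 0 < lab B x)
    (hC : a + m ≤ (shape C).card) : window a m (tabConcat C B) = window a m C := by
  funext x
  by_cases hx : x ∈ shape C
  · simp only [window, tabConcat_of_mem hx]
  · simp only [window, tabConcat_of_notMem hx, notMem_shape.1 hx]
    by_cases hxB : x ∈ shape B
    · have := hB x hxB
      simp [eq_some_lab hxB]
      omega
    · simp [notMem_shape.1 hxB]

variable [PartialOrder Λ]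

structure IsStandardLabelling (T : Λ → Option ℕ) : Prop where
  increasing : IsIncreasing T
  pos : ∀ x ∈ shape T, 0 < lab T x
  le_card : ∀ x ∈ shape T, lab T x ≤ (shape T).card

theorem IsStandard.isStandardLabelling {T : Λ → Option ℕ} (hT : IsStandard T) :
    IsStandardLabelling T := by
  obtain ⟨-, huniq, hrange, hlt⟩ := hT
  have hbounds : ∀ x ∈ shape T, 0 < lab T x ∧ lab T x ≤ (shape T).card := fun x hx => by
    obtain ⟨i, hi, h1, h2⟩ := hrange x hx
    rw [lab_eq_of_eq_some hi]
    exact ⟨h1, h2⟩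
  refine ⟨⟨fun x hx y hy hxy => hlt x y hx hy hxy _ _ (eq_some_lab hx) (eq_some_lab hy),
    fun x hx y hy hxy => ?_⟩, fun x hx => (hbounds x hx).1, fun x hx => (hbounds x hx).2⟩
  obtain ⟨z, -, hz⟩ := huniq (lab T x) (hbounds x hx).1 (hbounds x hx).2
  exact (hz x (eq_some_lab hx)).trans (hz y (hxy ▸ eq_some_lab hy)).symm

theorem IsStandardLabelling.tabConcat (hA : IsStandardLabelling A) (hB : IsStandardLabelling B)
    (hdisj : Disjoint (shape A) (shape B)) (hlt : ∀ x ∈ shape B, ∀ y ∈ shape A, ¬ x < y) :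
    IsStandardLabelling (tabConcat A B) := by
  have hcard : (shape (_root_.tabConcat A B)).card = (shape A).card + (shape B).card := by
    rw [shape_tabConcat, Finset.card_union_of_disjoint hdisj]
  have hmem : ∀ {x}, x ∈ shape (_root_.tabConcat A B) → x ∉ shape A → x ∈ shape B := fun hx hxA =>
    ((Finset.mem_union.1 (shape_tabConcat A B ▸ hx)).resolve_left hxA)
  refine ⟨⟨fun x hx y hy hxy => ?_, fun x hx y hy hxy => ?_⟩, fun x hx => ?_, fun x hx => ?_⟩
  · by_cases hxA : x ∈ shape A <;> by_cases hyA : y ∈ shape A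
    · simpa [lab_tabConcat_of_mem hxA, lab_tabConcat_of_mem hyA] using
        hA.increasing.strictMonoOn hxA hyA hxy
    · rw [lab_tabConcat_of_mem hxA, lab_tabConcat_of_notMem hyA (hmem hy hyA)]
      have := hA.le_card x hxA
      have := hB.pos y (hmem hy hyA)
      omega
    · exact (hlt x (hmem hx hxA) y hyA hxy).elim
    · rw [lab_tabConcat_of_notMem hxA (hmem hx hxA), lab_tabConcat_of_notMem hyA (hmem hy hyA)]
      simpa using hB.increasing.strictMonoOn (hmem hx hxA) (hmem hy hyA) hxy
  · by_cases hxA : x ∈ shape A <;> by_cases hyA : y ∈ shape A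
    · rw [lab_tabConcat_of_mem hxA, lab_tabConcat_of_mem hyA] at hxy
      exact hA.increasing.injOn hxA hyA hxy
    · rw [lab_tabConcat_of_mem hxA, lab_tabConcat_of_notMem hyA (hmem hy hyA)] at hxy
      have := hA.le_card x hxA
      have := hB.pos y (hmem hy hyA)
      omega
    · rw [lab_tabConcat_of_notMem hxA (hmem hx hxA), lab_tabConcat_of_mem hyA] at hxy
      have := hA.le_card y hyA
      have := hB.pos x (hmem hx hxA)
      omega
    · rw [lab_tabConcat_of_notMem hxA (hmem hx hxA), lab_tabConcat_of_notMem hyA (hmem hy hyA)]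
        at hxy
      exact hB.increasing.injOn (hmem hx hxA) (hmem hy hyA) (by omega)
  · by_cases hxA : x ∈ shape A
    · rw [lab_tabConcat_of_mem hxA]; exact hA.pos x hxA
    · rw [lab_tabConcat_of_notMem hxA (hmem hx hxA)]; have := hB.pos x (hmem hx hxA); omega
  · rw [hcard]
    by_cases hxA : x ∈ shape A
    · rw [lab_tabConcat_of_mem hxA]; have := hA.le_card x hxA; omega
    · rw [lab_tabConcat_of_notMem hxA (hmem hx hxA)]; have := hB.le_card x (hmem hx hxA); omega

theorem IsStandardLabelling.outside_tabConcat (hA : IsStandardLabelling A)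
    (hB : IsStandardLabelling B) :
    outside (shape A).card (shape B).card (_root_.tabConcat A B) = A := by
  funext x
  by_cases hxA : x ∈ shape A
  · have := hA.le_card x hxA
    simp only [outside, tabConcat_of_mem hxA, eq_some_lab hxA, Option.bind_some]
    rw [if_neg (by omega)]
  · rw [notMem_shape.1 hxA]
    by_cases hxB : x ∈ shape B
    · have := hB.pos x hxB
      have := hB.le_card x hxB
      simp only [outside, tabConcat_of_notMem hxA, eq_some_lab hxB, Option.map_some,
        Option.bind_some]
      rw [if_pos (by omega)]
    · simp [outside, tabConcat_of_notMem hxA, notMem_shape.1 hxB]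

theorem IsStandardLabelling.window_tabConcat (hA : IsStandardLabelling A)
    (hB : IsStandardLabelling B) (hdisj : Disjoint (shape A) (shape B)) :
    window (shape A).card (shape B).card (_root_.tabConcat A B) = B := by
  funext x
  by_cases hxA : x ∈ shape A
  · have := hA.le_card x hxA
    simp only [window, tabConcat_of_mem hxA, eq_some_lab hxA, Option.bind_some]
    rw [if_neg (by omega), notMem_shape.1 (Finset.disjoint_left.1 hdisj hxA)]
  · by_cases hxB : x ∈ shape B
    · have := hB.pos x hxB
      have := hB.le_card x hxB
      simp only [window, tabConcat_of_notMem hxA, eq_some_lab hxB, Option.map_some,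
        Option.bind_some]
      rw [if_pos (by omega), Nat.add_sub_cancel]
    · simp [window, tabConcat_of_notMem hxA, notMem_shape.1 hxB]

end Concatenation

theorem ShapeExtends.not_lt {Λ : Type} [PartialOrder Λ] {mu lam : Finset Λ}
    (h : ShapeExtends mu lam) :
    ∀ x ∈ mu, ∀ y ∈ lam, ¬ x < y := fun x hx y hy hxy =>
  Finset.disjoint_left.1 h.1 hy (h.2.2.2 x hx y (Finset.mem_union_left _ hy) hxy.le)

end

theorem haiman_move_general {Λ : Type} [Fintype Λ] [PartialOrder Λ]
    (lam mu nu : Finset Λ) (A T U B : Λ → Option ℕ)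
    (hmu : ShapeExtends mu lam) (hnu : ShapeExtends nu (lam ∪ mu))
    (hA : IsStandard A) (hT : IsStandard T) (hU : IsStandard U)
    (hB : IsStandard B)
    (hsA : shape A = lam) (hsT : shape T = mu) (hsU : shape U = mu)
    (hsB : shape B = nu)
    (h : DualEquiv T U) :
    DualEquiv (tabConcat (tabConcat A T) B) (tabConcat (tabConcat A U) B) := by
  subst hsA hsT hsB
  replace hA := hA.isStandardLabelling
  replace hT := hT.isStandardLabelling
  replace hU := hU.isStandardLabelling
  replace hB := hB.isStandardLabelling
  have hsAT : shape (tabConcat A T) = shape A ∪ shape T := shape_tabConcat A T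
  have hsAU : shape (tabConcat A U) = shape A ∪ shape T := by rw [shape_tabConcat, hsU]
  have hAT := hA.tabConcat hT hmu.1 hmu.not_lt
  have hAU := hA.tabConcat hU (hsU ▸ hmu.1) (hsU ▸ hmu.not_lt)
  have hcard : (shape A).card + (shape T).card ≤ (shape (tabConcat A T)).card := by
    rw [hsAT, Finset.card_union_of_disjoint hmu.1]
  refine WindowEquiv.dualEquiv (a := (shape A).card) (m := (shape T).card)
    (hAT.tabConcat hB (hsAT ▸ hnu.1) (hsAT ▸ hnu.not_lt)).increasing
    (hAU.tabConcat hB (hsAU ▸ hnu.1) (hsAU ▸ hnu.not_lt)).increasing ⟨?_, ?_⟩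
  · refine outside_tabConcat_congr (hsAT.trans hsAU.symm) ?_
    rw [hA.outside_tabConcat hT, ← hsU, hA.outside_tabConcat hU]
  · rw [window_tabConcat_of_le hB.pos hcard, window_tabConcat_of_le hB.pos (hsAU ▸ hsAT ▸ hcard),
      hA.window_tabConcat hT hmu.1, ← hsU, hA.window_tabConcat hU (hsU ▸ hmu.1)]
    exact h

/-- Haiman move compatibility. -/
theorem haiman_move {Λ : Type} [Fintype Λ] [PartialOrder Λ]
    (lam mu nu : Finset Λ) (A T U B : Λ → Option ℕ)
    (hlam : IsLowerIdeal lam)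
    (hmu : ShapeExtends mu lam) (hnu : ShapeExtends nu (lam ∪ mu))
    (hA : IsStandard A) (hT : IsStandard T) (hU : IsStandard U)
    (hB : IsStandard B)
    (hsA : shape A = lam) (hsT : shape T = mu) (hsU : shape U = mu)
    (hsB : shape B = nu)
    (h : DualEquiv T U) :
    DualEquiv (tabConcat (tabConcat A T) B) (tabConcat (tabConcat A U) B) :=
  haiman_move_general lam mu nu A T U B hmu hnu hA hT hU hB hsA hsT hsU hsB h
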